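/- Let B be a unital C*-algebra and {P_i : i ∈ 𝒢} ∪ {Q_i : i ∈ 𝒢} ⊆ B a family of projections (self-adjoint idempotents) satisfying: (i) Q_i Q_j = Q_j Q_i for all i, j ∈ 𝒢; (ii) P_i P_j = 0 for i ≠ j; (iii) Q_i P_j = A(i,j) P_j for all i, j ∈ 𝒢; (iv) for all finite subsets X, Y ⊆ 𝒢 such that the set S(X,Y) := {j ∈ 𝒢 : A(x,j) = 1 for all x ∈ X and A(y,j) = 0 for all y ∈ Y} is finite, one has ∏_{x∈X} Q_x · ∏_{y∈Y} (1 − Q_y) = Σ_{j ∈ S(X,Y)} P_j (empty products being 1 ∈ B). Then there exists a unital *-algebra homomorphism Φ : R̃_A → B with Φ(δ_i) = P_i and Φ(ρ_i) = Q_i for every i ∈ 𝒢. -/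

import Mathlib

open scoped BoundedContinuousFunction
open OnePoint

noncomputable section

namespace CK

variable {G : Type*}

/-- The `i`-th row of `A` as a complex-valued function on `G`. -/
def rho (A : G → G → Bool) (i : G) : G → ℂ := fun j => if A i j then 1 else 0

/-- The `i`-th row of the identity matrix as a complex-valued function on `G`. -/
def del [DecidableEq G] (i : G) : G → ℂ := fun j => if j = i then 1 else 0

/-- The `j`-th column of `A` as an element of `{0,1}^G`. -/
def col (A : G → G → Bool) (j : G) : G → Bool := fun i => A i j

variable [TopologicalSpace G] [DiscreteTopology G]

/-- `rho A i` as an element of `ℓ^∞(G)`, realized as bounded (continuous) functions on the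
discrete space `G`. -/
def rhoB (A : G → G → Bool) (i : G) : G →ᵇ ℂ :=
  BoundedContinuousFunction.ofNormedAddCommGroupDiscrete (rho A i) 1
    (by intro j; simp only [rho]; split <;> simp)

/-- `del i` as an element of `ℓ^∞(G)`. -/
def delB [DecidableEq G] (i : G) : G →ᵇ ℂ :=
  BoundedContinuousFunction.ofNormedAddCommGroupDiscrete (del i) 1
    (by intro j; simp only [del]; split <;> simp)

/-- The space `Γ̃_A`: the closure of `{(j, c_j) : j ∈ G}` in `G̃ × {0,1}^G`. -/
def GammaT (A : G → G → Bool) : Set (OnePoint G × (G → Bool)) :=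
  closure {p | ∃ j : G, p = ((j : OnePoint G), col A j)}

instance GammaT.compactSpace (A : G → G → Bool) : CompactSpace (GammaT A) :=
  isCompact_iff_compactSpace.mp (isClosed_closure).isCompact

variable [DecidableEq G]

/-- The generators of `R_A`: the rows of `A` and of the identity matrix. -/
def gens (A : G → G → Bool) : Set (G →ᵇ ℂ) :=
  Set.range (rhoB A) ∪ Set.range (delB (G := G))

/-- `R_A`, the smallest closed *-subalgebra of `ℓ^∞(G)` containing the rows of `A` and of the
identity matrix: the closure of the non-unital star subalgebra generated by them. -/
def RA (A : G → G → Bool) : Set (G →ᵇ ℂ) :=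
  closure (NonUnitalStarAlgebra.adjoin ℂ (gens A) : Set (G →ᵇ ℂ))

/-- `R̃_A`, the smallest closed unital *-subalgebra of `ℓ^∞(G)` containing `R_A` and `1`. -/
def RtA (A : G → G → Bool) : StarSubalgebra ℂ (G →ᵇ ℂ) :=
  (StarAlgebra.adjoin ℂ (gens A)).topologicalClosure

/-- The restriction map `Φ : C(Γ̃_A, ℂ) → ℓ^∞(G)`, `Φ(f)(j) = f(j, c_j)`. -/
def Phi (A : G → G → Bool) (f : C(GammaT A, ℂ)) : G →ᵇ ℂ :=
  BoundedContinuousFunction.ofNormedAddCommGroupDiscrete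
    (fun j => f ⟨((j : OnePoint G), col A j), subset_closure ⟨j, rfl⟩⟩) ‖f‖
    (fun j => f.norm_coe_le_norm _)

end CK

/-!
Restricting to the points `(j, c_j)`, which are dense in `Γ̃_A`, is an isometric
*-homomorphism `C(Γ̃_A) → ℓ^∞(G)`; by Stone–Weierstrass its range is the closed unital
*-algebra generated by the restrictions `ρ_i`, `δ_i` of the coordinate functions, so
`C(Γ̃_A) ≅ R̃_A`.

On the other side, the `P_i` and `Q_i` commute (`Q_i P_j ∈ {P_j, 0}` is self-adjoint), so they
generate a commutative C*-algebra `D ≅ C(Ω(D))`. A character `χ` of `D` determines the point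
`(ω, c)` of `G̃ × {0,1}^G` with `c_i = χ(Q_i)` and `ω = j` if `χ(P_j) = 1`, `ω = ∞` if `χ` kills
every `P_j`. Relation (iv) says that in the latter case every finite pattern of `c` occurs in
infinitely many columns of `A`, which puts `(∞, c)` in `Γ̃_A`. Pulling back along `χ ↦ (ω, c)`
gives `C(Γ̃_A) → C(Ω(D)) ≅ D ⊆ B`, sending the coordinate functions to `P_j` and `Q_i`.
-/

open Set Filter Topology WeakDual
open scoped IsMulCommutative

theorem IsClopen.continuous_ite {X : Type*} [TopologicalSpace X] {U : Set X}
    [DecidablePred (· ∈ U)] (hU : IsClopen U) :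
    Continuous fun x => if x ∈ U then (1 : ℂ) else 0 :=
  continuous_if (by simp [hU.frontier_eq]) continuousOn_const continuousOn_const

theorem OnePoint.isClopen_singleton_coe {G : Type*} [TopologicalSpace G] [DiscreteTopology G]
    (j : G) : IsClopen {(j : OnePoint G)} :=
  ⟨isClosed_singleton, by simpa using OnePoint.isOpen_image_coe.2 (isOpen_discrete {j})⟩

theorem OnePoint.continuous_of_isClopen_preimage_coe {X G : Type*} [TopologicalSpace X]
    [TopologicalSpace G] [DiscreteTopology G] {f : X → OnePoint G}
    (hf : ∀ j : G, IsClopen (f ⁻¹' {(j : OnePoint G)})) : Continuous f := by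
  refine continuous_def.2 fun U hU => ?_
  by_cases hinf : ∞ ∈ U
  · have hfin : ((↑) ⁻¹' U : Set G)ᶜ.Finite :=
      ((OnePoint.isOpen_iff_of_mem' hinf).1 hU).1.finite_of_discrete
    have : f ⁻¹' U = ⋂ j ∈ ((↑) ⁻¹' U : Set G)ᶜ, (f ⁻¹' {(j : OnePoint G)})ᶜ := by
      ext x
      induction hx : f x using OnePoint.rec with
      | infty => simp [hx, hinf]
      | coe a =>
        simpa [hx] using ⟨fun ha i hi hai => hi (hai ▸ ha), fun H => not_not.1 fun ha => H a ha rfl⟩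
    rw [this]
    exact hfin.isOpen_biInter fun j _ => (hf j).isClosed.isOpen_compl
  · have : f ⁻¹' U = ⋃ j ∈ ((↑) ⁻¹' U : Set G), f ⁻¹' {(j : OnePoint G)} := by
      ext x
      induction hx : f x using OnePoint.rec <;> simp [hx, hinf]
    rw [this]
    exact isOpen_biUnion fun j _ => (hf j).isOpen

theorem Finset.map_prod_eq_noncommProd {F α β γ : Type*} [CommMonoid β] [Monoid γ]
    [FunLike F β γ] [MonoidHomClass F β γ] (g : F) (s : Finset α) (f : α → β) :
    g (∏ i ∈ s, f i) =
      s.noncommProd (fun i => g (f i)) fun a _ b _ _ => (Commute.all (f a) (f b)).map g :=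
  (congrArg g (s.noncommProd_eq_prod f).symm).trans (s.map_noncommProd f _ g)

theorem StarAlgHom.topologicalClosure_adjoin_image_eq_range {R A B : Type*} [CommSemiring R]
    [StarRing R] [TopologicalSpace A] [Semiring A] [StarRing A] [Algebra R A] [StarModule R A]
    [IsSemitopologicalSemiring A] [ContinuousStar A]
    [TopologicalSpace B] [Semiring B] [StarRing B] [Algebra R B] [StarModule R B]
    [IsSemitopologicalSemiring B] [ContinuousStar B]
    (φ : A →⋆ₐ[R] B) (hφ : IsClosedEmbedding φ) {s : Set A}
    (hs : (StarAlgebra.adjoin R s).topologicalClosure = ⊤) :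
    (StarAlgebra.adjoin R (φ '' s)).topologicalClosure = φ.range := by
  rw [← StarAlgHom.map_adjoin, StarSubalgebra.topologicalClosure_map _ _ hφ.isClosedMap
    hφ.continuous, hs, StarAlgHom.range_eq_map_top]

theorem StarSubalgebra.isMulCommutative_topologicalClosure_adjoin (R : Type*) {A : Type*}
    [CommSemiring R] [StarRing R] [TopologicalSpace A] [Semiring A] [StarRing A] [Algebra R A]
    [StarModule R A] [IsSemitopologicalSemiring A] [ContinuousStar A] [T2Space A] {s : Set A}
    (hcomm : ∀ x ∈ s, ∀ y ∈ s, x * y = y * x)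
    (hcomm_star : ∀ x ∈ s, ∀ y ∈ s, x * star y = star y * x) :
    IsMulCommutative (StarAlgebra.adjoin R s).topologicalClosure := by
  have hle := StarSubalgebra.topologicalClosure_adjoin_le_centralizer_centralizer R s
  refine .of_setLike_mul_comm fun x hx y hy => ?_
  have hcomm' : ∀ a ∈ s ∪ star s, ∀ b ∈ s ∪ star s, a * b = b * a := fun a ha b hb ↦
    Set.union_star_self_comm (fun _ ha _ hb ↦ hcomm _ hb _ ha)
      (fun _ ha _ hb ↦ hcomm_star _ hb _ ha) b hb a ha
  replace hx := hle hx
  replace hy := hle hy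
  rw [← SetLike.mem_coe, StarSubalgebra.coe_centralizer_centralizer] at hx hy
  exact Set.centralizer_centralizer_comm_of_comm hcomm' _ hx _ hy

namespace WeakDual.CharacterSpace

variable {A : Type*} [NonUnitalNonAssocSemiring A] [TopologicalSpace A] [Module ℂ A]

theorem apply_eq_zero_or_one_of_isIdempotentElem {e : A} (he : IsIdempotentElem e)
    (χ : characterSpace ℂ A) : χ e = 0 ∨ χ e = 1 :=
  IsIdempotentElem.iff_eq_zero_or_one.1 (he.map χ)

open scoped Classical in
theorem ite_apply_eq_one {e : A} (he : IsIdempotentElem e) (χ : characterSpace ℂ A) :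
    (if χ e = 1 then 1 else 0) = χ e := by
  rcases apply_eq_zero_or_one_of_isIdempotentElem he χ with h | h <;> simp [h]

theorem isClopen_setOf_apply_eq_one {e : A} (he : IsIdempotentElem e) :
    IsClopen {χ : characterSpace ℂ A | χ e = 1} := by
  have hcont : Continuous fun χ : characterSpace ℂ A => χ e :=
    (eval_continuous e).comp continuous_subtype_val
  refine ⟨isClosed_eq hcont continuous_const, ?_⟩
  have hcompl : {χ : characterSpace ℂ A | χ e = 1} = {χ | χ e = 0}ᶜ := by
    ext χ
    rcases apply_eq_zero_or_one_of_isIdempotentElem he χ with h | h <;> simp [h]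
  rw [hcompl]
  exact (isClosed_eq hcont continuous_const).isOpen_compl

end WeakDual.CharacterSpace

namespace CK

section GammaT

variable {G : Type*} [TopologicalSpace G]

def base (A : G → G → Bool) (j : G) : GammaT A :=
  ⟨((j : OnePoint G), col A j), subset_closure ⟨j, rfl⟩⟩

theorem denseRange_base (A : G → G → Bool) : DenseRange (base A) := fun x => by
  have : range (Subtype.val ∘ base A) = {p | ∃ j : G, p = ((j : OnePoint G), col A j)} := by
    ext
    exact exists_congr fun _ => eq_comm
  rw [closure_subtype, ← range_comp, this]
  exact x.2

def rhoC (A : G → G → Bool) (i : G) : C(GammaT A, ℂ) where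
  toFun x := if x.1.2 i then 1 else 0
  continuous_toFun :=
    (continuous_of_discreteTopology (f := fun b : Bool => if b then (1 : ℂ) else 0)).comp
      ((continuous_apply i).comp (continuous_snd.comp continuous_subtype_val))

@[simp]
theorem rhoC_apply (A : G → G → Bool) (i : G) (x : GammaT A) :
    rhoC A i x = if x.1.2 i then 1 else 0 :=
  rfl

variable [DiscreteTopology G]

open scoped Classical in
def delC (A : G → G → Bool) (j : G) : C(GammaT A, ℂ) where
  toFun x := if x.1.1 = j then 1 else 0
  continuous_toFun := (OnePoint.isClopen_singleton_coe j).continuous_ite.comp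
    (continuous_fst.comp continuous_subtype_val : Continuous fun x : GammaT A => x.1.1)

open scoped Classical in
@[simp]
theorem delC_apply (A : G → G → Bool) (j : G) (x : GammaT A) :
    delC A j x = if x.1.1 = j then 1 else 0 :=
  rfl

theorem infty_mem_gammaT {A : G → G → Bool} {c : G → Bool}
    (hc : ∀ I : Finset G, {j | ∀ i ∈ I, A i j = c i}.Infinite) :
    ((∞ : OnePoint G), c) ∈ GammaT A := by
  have hF : (cofinite ⊓ comap (col A) (𝓝 c)).NeBot := by
    refine inf_neBot_iff.2 fun s hs t ht => ?_
    obtain ⟨V, hV, hVt⟩ := mem_comap.1 ht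
    rw [nhds_pi, Filter.mem_pi] at hV
    obtain ⟨I, hI, u, hu, hIu⟩ := hV
    have hsub : {j | ∀ i ∈ hI.toFinset, A i j = c i} ⊆ t := fun j hj =>
      hVt (hIu fun i hi => by
        rw [show col A j i = c i from hj i (hI.mem_toFinset.2 hi)]
        exact mem_of_mem_nhds (hu i))
    obtain ⟨j, hjt, hjs⟩ := (((hc hI.toFinset).mono hsub).sdiff (mem_cofinite.1 hs)).nonempty
    exact ⟨j, not_not.1 hjs, hjt⟩
  refine mem_closure_of_tendsto (b := cofinite ⊓ comap (col A) (𝓝 c)) ?_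
    (Eventually.of_forall fun j => ⟨j, rfl⟩)
  refine Tendsto.prodMk_nhds ?_ (tendsto_comap.mono_left inf_le_right)
  rw [← cocompact_eq_cofinite, ← coclosedCompact_eq_cocompact]
  exact OnePoint.tendsto_coe_infty.mono_left inf_le_left

def phiHom (A : G → G → Bool) : C(GammaT A, ℂ) →⋆ₐ[ℂ] (G →ᵇ ℂ) where
  toFun := Phi A
  map_one' := rfl
  map_mul' _ _ := rfl
  map_zero' := rfl
  map_add' _ _ := rfl
  commutes' _ := rfl
  map_star' _ := rfl

theorem isometry_phiHom (A : G → G → Bool) : Isometry (phiHom A) := by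
  refine AddMonoidHomClass.isometry_of_norm _ fun f => le_antisymm ?_ ?_
  · exact BoundedContinuousFunction.norm_ofNormedAddCommGroup_le _ (norm_nonneg f)
      fun j => f.norm_coe_le_norm _
  · refine (f.norm_le (norm_nonneg _)).2 fun x => (denseRange_base A).induction_on x ?_ fun j => ?_
    · exact isClosed_le (by fun_prop) continuous_const
    · exact (phiHom A f).norm_coe_le_norm j

theorem phiHom_rhoC (A : G → G → Bool) (i : G) : phiHom A (rhoC A i) = rhoB A i :=
  rfl

theorem phiHom_delC [DecidableEq G] (A : G → G → Bool) (j : G) :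
    phiHom A (delC A j) = delB j := by
  classical
  ext k
  show (if ((k : OnePoint G) = j) then (1 : ℂ) else 0) = if k = j then 1 else 0
  exact if_congr OnePoint.coe_eq_coe rfl rfl

theorem topologicalClosure_adjoin_rhoC_delC (A : G → G → Bool) :
    (StarAlgebra.adjoin ℂ (range (rhoC A) ∪ range (delC A))).topologicalClosure = ⊤ := by
  classical
  refine ContinuousMap.starSubalgebra_topologicalClosure_eq_top_of_separatesPoints _ ?_
  intro x y hxy
  by_cases hcol : x.1.2 = y.1.2
  · have hpt : x.1.1 ≠ y.1.1 := fun h => hxy (Subtype.ext (Prod.ext h hcol))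
    obtain ⟨j, hj⟩ : ∃ j : G, x.1.1 = j ∨ y.1.1 = j := by
      cases hx : x.1.1 with
      | infty => cases hy : y.1.1 with
        | infty => exact absurd (hx.trans hy.symm) hpt
        | coe j => exact ⟨j, Or.inr rfl⟩
      | coe j => exact ⟨j, Or.inl rfl⟩
    refine ⟨_, ⟨delC A j, StarAlgebra.subset_adjoin ℂ _ (Or.inr ⟨j, rfl⟩), rfl⟩, ?_⟩
    rcases hj with hj | hj
    · simpa [hj] using hpt.symm
    · simpa [hj] using hpt
  · obtain ⟨i, hi⟩ := Function.ne_iff.mp hcol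
    refine ⟨_, ⟨rhoC A i, StarAlgebra.subset_adjoin ℂ _ (Or.inl ⟨i, rfl⟩), rfl⟩, ?_⟩
    simp only [rhoC_apply]
    cases hx : x.1.2 i <;> cases hy : y.1.2 i <;> simp_all

variable [DecidableEq G]

theorem RtA_eq_range_phiHom (A : G → G → Bool) : RtA A = (phiHom A).range := by
  have hgens : gens A = phiHom A '' (range (rhoC A) ∪ range (delC A)) := by
    simp only [gens, image_union, ← range_comp]
    congr
    funext
    exact (phiHom_delC A _).symm
  rw [RtA, hgens]
  exact (phiHom A).topologicalClosure_adjoin_image_eq_range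
    (isometry_phiHom A).isClosedEmbedding (topologicalClosure_adjoin_rhoC_delC A)

theorem exists_starAlgHom_RtA_of_gammaT {A : G → G → Bool} {R : Type*} [Semiring R]
    [Algebra ℂ R] [Star R] (ψ : C(GammaT A, ℂ) →⋆ₐ[ℂ] R) :
    ∃ Φ : RtA A →⋆ₐ[ℂ] R, (∀ i h, Φ ⟨delB i, h⟩ = ψ (delC A i)) ∧
      ∀ i h, Φ ⟨rhoB A i, h⟩ = ψ (rhoC A i) := by
  set e := StarAlgEquiv.ofInjective _ (isometry_phiHom A).injective
  refine ⟨ψ.comp (e.symm.toStarAlgHom.comp (StarSubalgebra.inclusion (RtA_eq_range_phiHom A).le)),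
    fun i h => congrArg ψ ?_, fun i h => congrArg ψ ?_⟩
  · exact e.symm_apply_eq.2 (Subtype.ext (phiHom_delC A i).symm)
  · exact e.symm_apply_eq.2 (Subtype.ext (phiHom_rhoC A i).symm)

end GammaT

section Characters

open WeakDual.CharacterSpace

variable {G D : Type*}

/-- Relations (ii)–(iv) for idempotents `p j`, `q i` of a commutative ring. -/
structure IsFamily [CommRing D] (A : G → G → Bool) (p q : G → D) : Prop where
  isIdempotentElem_p : ∀ j, IsIdempotentElem (p j)
  isIdempotentElem_q : ∀ i, IsIdempotentElem (q i)
  p_mul_p : ∀ i j, i ≠ j → p i * p j = 0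
  q_mul_p : ∀ i j, q i * p j = if A i j then p j else 0
  prod_mul_prod_one_sub : ∀ (X Y : Finset G)
    (hfin : {j : G | (∀ x ∈ X, A x j = true) ∧ ∀ y ∈ Y, A y j = false}.Finite),
    (∏ x ∈ X, q x) * ∏ y ∈ Y, (1 - q y) = ∑ j ∈ hfin.toFinset, p j

variable [CommRing D] [TopologicalSpace D] [Algebra ℂ D]

open scoped Classical in
def charPoint (p : G → D) (χ : characterSpace ℂ D) : OnePoint G :=
  if h : ∃ j, χ (p j) = 1 then h.choose else ∞

open scoped Classical in
def charCol (q : G → D) (χ : characterSpace ℂ D) (i : G) : Bool :=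
  χ (q i) = 1

theorem charPoint_eq_infty_iff {p : G → D} (χ : characterSpace ℂ D) :
    charPoint p χ = ∞ ↔ ∀ j, χ (p j) ≠ 1 := by
  unfold charPoint
  split_ifs with hex <;> simpa using hex

namespace IsFamily

variable {A : G → G → Bool} {p q : G → D}

theorem charPoint_eq_coe_iff (h : IsFamily A p q) (χ : characterSpace ℂ D) (j : G) :
    charPoint p χ = j ↔ χ (p j) = 1 := by
  unfold charPoint
  split_ifs with hex
  · rw [OnePoint.coe_eq_coe]
    refine ⟨fun hj => hj ▸ hex.choose_spec, fun hj => ?_⟩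
    by_contra hne
    simpa [hj, hex.choose_spec] using congrArg χ (h.p_mul_p _ _ hne)
  · exact ⟨fun he => absurd he (OnePoint.infty_ne_coe j), fun hj => absurd ⟨j, hj⟩ hex⟩

theorem charCol_eq_col (h : IsFamily A p q) {χ : characterSpace ℂ D} {j : G}
    (hj : χ (p j) = 1) : charCol q χ = col A j := by
  funext i
  have hi := congrArg χ (h.q_mul_p i j)
  rw [map_mul, hj, mul_one] at hi
  cases hA : A i j <;> simp_all [charCol, col]

theorem infinite_setOf_col_eq_charCol (h : IsFamily A p q) {χ : characterSpace ℂ D}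
    (hp : ∀ j, χ (p j) ≠ 1) (I : Finset G) :
    {j | ∀ i ∈ I, A i j = charCol q χ i}.Infinite := by
  classical
  set X := I.filter (charCol q χ · = true)
  set Y := I.filter (charCol q χ · = false)
  have hS : {j | ∀ i ∈ I, A i j = charCol q χ i} =
      {j | (∀ x ∈ X, A x j = true) ∧ ∀ y ∈ Y, A y j = false} := by
    ext j
    simp only [mem_ofPred_eq, X, Y, Finset.mem_filter]
    refine ⟨fun hj => ⟨fun x hx => hx.2 ▸ hj x hx.1, fun y hy => hy.2 ▸ hj y hy.1⟩,
      fun hj i hi => ?_⟩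
    cases hc : charCol q χ i
    exacts [hj.2 i ⟨hi, hc⟩, hj.1 i ⟨hi, hc⟩]
  rw [hS]
  -- Otherwise relation (iv) for `X`, `Y` evaluated at `χ` reads `1 = 0`.
  intro hfin
  have hX : ∀ x ∈ X, χ (q x) = 1 := fun x hx => by
    simpa [charCol] using (Finset.mem_filter.1 hx).2
  have hY : ∀ y ∈ Y, χ (1 - q y) = 1 := fun y hy => by
    have : χ (q y) ≠ 1 := by simpa [charCol] using (Finset.mem_filter.1 hy).2
    rw [map_sub, map_one,
      (apply_eq_zero_or_one_of_isIdempotentElem (h.isIdempotentElem_q y) χ).resolve_right this,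
      sub_zero]
  have hP : ∀ j, χ (p j) = 0 := fun j =>
    (apply_eq_zero_or_one_of_isIdempotentElem (h.isIdempotentElem_p j) χ).resolve_right (hp j)
  have := congrArg χ (h.prod_mul_prod_one_sub X Y hfin)
  rw [map_mul, map_prod, map_prod, map_sum, Finset.prod_eq_one hX, Finset.prod_eq_one hY] at this
  simp [hP] at this

theorem continuous_charCol (h : IsFamily A p q) : Continuous (charCol q) := by
  refine continuous_pi fun i => (continuous_bool_rng true).2 ?_
  simpa [charCol, preimage] using isClopen_setOf_apply_eq_one (h.isIdempotentElem_q i)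

variable [TopologicalSpace G] [DiscreteTopology G]

theorem continuous_charPoint (h : IsFamily A p q) : Continuous (charPoint p) :=
  OnePoint.continuous_of_isClopen_preimage_coe fun j => by
    simpa only [preimage, mem_singleton_iff, h.charPoint_eq_coe_iff] using
      isClopen_setOf_apply_eq_one (h.isIdempotentElem_p j)

theorem charPoint_charCol_mem_gammaT (h : IsFamily A p q) (χ : characterSpace ℂ D) :
    (charPoint p χ, charCol q χ) ∈ GammaT A := by
  by_cases hj : ∃ j, χ (p j) = 1
  · obtain ⟨j, hj⟩ := hj
    rw [(h.charPoint_eq_coe_iff χ j).2 hj, h.charCol_eq_col hj]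
    exact subset_closure ⟨j, rfl⟩
  · rw [(charPoint_eq_infty_iff χ).2 (not_exists.1 hj)]
    exact infty_mem_gammaT (h.infinite_setOf_col_eq_charCol (not_exists.1 hj))

def toGammaT (h : IsFamily A p q) : C(characterSpace ℂ D, GammaT A) where
  toFun χ := ⟨(charPoint p χ, charCol q χ), h.charPoint_charCol_mem_gammaT χ⟩
  continuous_toFun := (h.continuous_charPoint.prodMk h.continuous_charCol).subtype_mk _

theorem delC_toGammaT (h : IsFamily A p q) (χ : characterSpace ℂ D) (j : G) :
    delC A j (h.toGammaT χ) = χ (p j) := by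
  rw [delC_apply]
  convert ite_apply_eq_one (h.isIdempotentElem_p j) χ using 2
  exact h.charPoint_eq_coe_iff χ j

theorem rhoC_toGammaT (h : IsFamily A p q) (χ : characterSpace ℂ D) (i : G) :
    rhoC A i (h.toGammaT χ) = χ (q i) := by
  rw [rhoC_apply]
  convert ite_apply_eq_one (h.isIdempotentElem_q i) χ using 2
  exact decide_eq_true_iff

end IsFamily

end Characters

theorem IsFamily.exists_starAlgHom {G D : Type*} [TopologicalSpace G] [DiscreteTopology G]
    [CommCStarAlgebra D] {A : G → G → Bool} {p q : G → D} (h : IsFamily A p q) :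
    ∃ ψ : C(GammaT A, ℂ) →⋆ₐ[ℂ] D, (∀ j, ψ (delC A j) = p j) ∧ ∀ i, ψ (rhoC A i) = q i := by
  let e := gelfandStarTransform D
  refine ⟨(e.symm : C(characterSpace ℂ D, ℂ) →⋆ₐ[ℂ] D).comp (h.toGammaT.compStarAlgHom' ℂ ℂ),
    fun j => e.symm_apply_eq.2 ?_, fun i => e.symm_apply_eq.2 ?_⟩
  · exact ContinuousMap.ext fun χ => h.delC_toGammaT χ j
  · exact ContinuousMap.ext fun χ => h.rhoC_toGammaT χ i

section Projections

variable {G B : Type*} {A : G → G → Bool} {P Q : G → B}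

theorem IsFamily.of_injective {D : Type*} [CommRing D] [Ring B] (f : D →+* B)
    (hf : Function.Injective f) {p q : G → D} (hpP : ∀ j, f (p j) = P j) (hqQ : ∀ i, f (q i) = Q i)
    (hP : ∀ j, IsIdempotentElem (P j)) (hQ : ∀ i, IsIdempotentElem (Q i))
    (hQc : ∀ i j : G, Commute (Q i) (Q j))
    (hPo : ∀ i j : G, i ≠ j → P i * P j = 0)
    (hQP : ∀ i j : G, Q i * P j = if A i j = true then P j else 0)
    (hCK : ∀ (X Y : Finset G)
      (hfin : {j : G | (∀ x ∈ X, A x j = true) ∧ ∀ y ∈ Y, A y j = false}.Finite),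
      X.noncommProd Q (fun a _ b _ _ => hQc a b) *
        Y.noncommProd (fun y => 1 - Q y)
          (fun a _ b _ _ => (Commute.one_left (1 - Q b)).sub_left
            (((Commute.one_right (Q a)).sub_right (hQc a b)))) =
      ∑ j ∈ hfin.toFinset, P j) :
    IsFamily A p q where
  isIdempotentElem_p j := hf <| by rw [map_mul, hpP]; exact hP j
  isIdempotentElem_q i := hf <| by rw [map_mul, hqQ]; exact hQ i
  p_mul_p i j hij := hf <| by rw [map_mul, hpP, hpP, map_zero]; exact hPo i j hij
  q_mul_p i j := hf <| by rw [map_mul, hqQ, hpP, hQP]; split <;> simp [hpP]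
  prod_mul_prod_one_sub X Y hfin := hf <| by
    rw [map_mul, map_sum, Finset.map_prod_eq_noncommProd, Finset.map_prod_eq_noncommProd]
    simpa [hpP, hqQ] using hCK X Y hfin

theorem commute_of_mem_range_union [Ring B] [StarRing B] (hPsa : ∀ j, IsSelfAdjoint (P j))
    (hQsa : ∀ i, IsSelfAdjoint (Q i)) (hQc : ∀ i j : G, Commute (Q i) (Q j))
    (hPo : ∀ i j : G, i ≠ j → P i * P j = 0)
    (hQP : ∀ i j : G, Q i * P j = if A i j = true then P j else 0) :
    ∀ x ∈ range P ∪ range Q, ∀ y ∈ range P ∪ range Q, Commute x y := by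
  have hQP' (i j : G) : Commute (Q i) (P j) := by
    refine (IsSelfAdjoint.commute_iff (hQsa i) (hPsa j)).2 ?_
    rw [hQP]
    split
    exacts [hPsa j, .zero _]
  have hPP (i j : G) : Commute (P i) (P j) := by
    rcases eq_or_ne i j with rfl | hij
    · exact .refl _
    · exact (hPo i j hij).trans (hPo j i hij.symm).symm
  rintro _ (⟨i, rfl⟩ | ⟨i, rfl⟩) _ (⟨j, rfl⟩ | ⟨j, rfl⟩)
  exacts [hPP i j, (hQP' j i).symm, hQP' i j, hQc i j]

theorem isMulCommutative_topologicalClosure_adjoin_range_union [TopologicalSpace B] [Ring B]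
    [StarRing B] [Algebra ℂ B] [StarModule ℂ B] [IsSemitopologicalRing B] [ContinuousStar B]
    [T2Space B] (hPsa : ∀ j, IsSelfAdjoint (P j)) (hQsa : ∀ i, IsSelfAdjoint (Q i))
    (hQc : ∀ i j : G, Commute (Q i) (Q j)) (hPo : ∀ i j : G, i ≠ j → P i * P j = 0)
    (hQP : ∀ i j : G, Q i * P j = if A i j = true then P j else 0) :
    IsMulCommutative (StarAlgebra.adjoin ℂ (range P ∪ range Q)).topologicalClosure := by
  have hcomm := commute_of_mem_range_union hPsa hQsa hQc hPo hQP
  have hsa : ∀ x ∈ range P ∪ range Q, IsSelfAdjoint x := by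
    rintro _ (⟨j, rfl⟩ | ⟨i, rfl⟩)
    exacts [hPsa j, hQsa i]
  refine StarSubalgebra.isMulCommutative_topologicalClosure_adjoin ℂ
    (fun x hx y hy => hcomm x hx y hy) fun x hx y hy => ?_
  rw [(hsa y hy).star_eq]
  exact hcomm x hx y hy

end Projections

end CK

theorem stmt_7_general {G : Type*} [TopologicalSpace G] [DiscreteTopology G]
    [DecidableEq G] (A : G → G → Bool)
    {B : Type*} [NormedRing B] [StarRing B] [CStarRing B] [CompleteSpace B]
    [NormedAlgebra ℂ B] [StarModule ℂ B]
    (P Q : G → B)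
    (hPproj : ∀ i : G, IsSelfAdjoint (P i) ∧ IsIdempotentElem (P i))
    (hQproj : ∀ i : G, IsSelfAdjoint (Q i) ∧ IsIdempotentElem (Q i))
    -- (i) the `Q_i` commute
    (hQc : ∀ i j : G, Commute (Q i) (Q j))
    -- (ii) the `P_i` are mutually orthogonal
    (hPo : ∀ i j : G, i ≠ j → P i * P j = 0)
    -- (iii) `Q_i P_j = A(i,j) P_j`
    (hQP : ∀ i j : G, Q i * P j = if A i j = true then P j else 0)
    -- (iv) the Cuntz–Krieger relation for pairs of finite sets `X`, `Y` for which the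
    -- function `j ↦ A(X,Y,j)` is finitely supported
    (hCK : ∀ (X Y : Finset G)
      (hfin : {j : G | (∀ x ∈ X, A x j = true) ∧ ∀ y ∈ Y, A y j = false}.Finite),
      X.noncommProd Q (fun a _ b _ _ => hQc a b) *
        Y.noncommProd (fun y => 1 - Q y)
          (fun a _ b _ _ => (Commute.one_left (1 - Q b)).sub_left
            (((Commute.one_right (Q a)).sub_right (hQc a b)))) =
      ∑ j ∈ hfin.toFinset, P j) :
    ∃ Φ : CK.RtA A →⋆ₐ[ℂ] B,
      (∀ (i : G) (h : CK.delB i ∈ CK.RtA A), Φ ⟨CK.delB i, h⟩ = P i) ∧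
      (∀ (i : G) (h : CK.rhoB A i ∈ CK.RtA A), Φ ⟨CK.rhoB A i, h⟩ = Q i) := by
  let _ : CStarAlgebra B := { }
  let S := StarAlgebra.adjoin ℂ (range P ∪ range Q)
  let D := S.topologicalClosure
  have : IsMulCommutative D := CK.isMulCommutative_topologicalClosure_adjoin_range_union
    (fun j => (hPproj j).1) (fun i => (hQproj i).1) hQc hPo hQP
  have : IsClosed (D : Set B) := S.isClosed_topologicalClosure
  let _ : CommCStarAlgebra D := { mul_comm := mul_comm }
  have hmem {x : B} (hx : x ∈ range P ∪ range Q) : x ∈ D :=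
    S.le_topologicalClosure (StarAlgebra.subset_adjoin ℂ _ hx)
  have hfam : CK.IsFamily A (fun j => (⟨P j, hmem (.inl ⟨j, rfl⟩)⟩ : D))
      (fun i => ⟨Q i, hmem (.inr ⟨i, rfl⟩)⟩) :=
    .of_injective (D.subtype : D →+* B) Subtype.val_injective (fun _ => rfl) (fun _ => rfl)
      (fun j => (hPproj j).2) (fun i => (hQproj i).2) hQc hPo hQP hCK
  obtain ⟨ψ, hψP, hψQ⟩ := hfam.exists_starAlgHom
  obtain ⟨Φ, hΦP, hΦQ⟩ := CK.exists_starAlgHom_RtA_of_gammaT (D.subtype.comp ψ)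
  refine ⟨Φ, fun i h => ?_, fun i h => ?_⟩
  · rw [hΦP, StarAlgHom.comp_apply, hψP]
    rfl
  · rw [hΦQ, StarAlgHom.comp_apply, hψQ]
    rfl

/-- If `{P_i}, {Q_i}` are projections in a unital C*-algebra `B` satisfying
the (generalized Cuntz–Krieger) relations (i)–(iv), then `δ_i ↦ P_i`, `ρ_i ↦ Q_i` extends to
a unital *-algebra homomorphism `R̃_A → B`. -/
theorem stmt_7 {G : Type*} [Nonempty G] [TopologicalSpace G] [DiscreteTopology G]
    [DecidableEq G] (A : G → G → Bool) (hA : ∀ i : G, ∃ j : G, A i j = true)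
    {B : Type*} [NormedRing B] [StarRing B] [CStarRing B] [CompleteSpace B]
    [NormedAlgebra ℂ B] [StarModule ℂ B]
    (P Q : G → B)
    (hPproj : ∀ i : G, IsSelfAdjoint (P i) ∧ IsIdempotentElem (P i))
    (hQproj : ∀ i : G, IsSelfAdjoint (Q i) ∧ IsIdempotentElem (Q i))
    -- (i) the `Q_i` commute
    (hQc : ∀ i j : G, Commute (Q i) (Q j))
    -- (ii) the `P_i` are mutually orthogonal
    (hPo : ∀ i j : G, i ≠ j → P i * P j = 0)
    -- (iii) `Q_i P_j = A(i,j) P_j`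
    (hQP : ∀ i j : G, Q i * P j = if A i j = true then P j else 0)
    -- (iv) the Cuntz–Krieger relation for pairs of finite sets `X`, `Y` for which the
    -- function `j ↦ A(X,Y,j)` is finitely supported
    (hCK : ∀ (X Y : Finset G)
      (hfin : {j : G | (∀ x ∈ X, A x j = true) ∧ ∀ y ∈ Y, A y j = false}.Finite),
      X.noncommProd Q (fun a _ b _ _ => hQc a b) *
        Y.noncommProd (fun y => 1 - Q y)
          (fun a _ b _ _ => (Commute.one_left (1 - Q b)).sub_left
            (((Commute.one_right (Q a)).sub_right (hQc a b)))) =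
      ∑ j ∈ hfin.toFinset, P j) :
    ∃ Φ : CK.RtA A →⋆ₐ[ℂ] B,
      (∀ (i : G) (h : CK.delB i ∈ CK.RtA A), Φ ⟨CK.delB i, h⟩ = P i) ∧
      (∀ (i : G) (h : CK.rhoB A i ∈ CK.RtA A), Φ ⟨CK.rhoB A i, h⟩ = Q i) :=
  stmt_7_general A P Q hPproj hQproj hQc hPo hQP hCK
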